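/- arXiv:2007.03917 — 8 statements merged into one kernel-verified Lean document; each statement's English description precedes it below -/
import Mathlib

section
/- The unital associative ℂ-algebra A_k has a Poincaré–Birkhoff–Witt basis: the monomials (G⁻)^a J^b L^c (G⁺)^d, for a, b, c, d ranging over the natural numbers, form a basis of A_k as a ℂ-vector space (equivalently, A_k ≅ ℂ[G⁻] ⊗ ℂ[J,L] ⊗ ℂ[G⁺] as vector spaces). -/
noncomputable section

namespace BP

/-- The free `ℂ`-algebra on four generators `J, G⁺, G⁻, L`. -/
abbrev F : Type := FreeAlgebra ℂ (Fin 4)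

def jF : F := FreeAlgebra.ι ℂ 0
def gpF : F := FreeAlgebra.ι ℂ 1
def gmF : F := FreeAlgebra.ι ℂ 2
def lF : F := FreeAlgebra.ι ℂ 3

/-- `f_k(J, L) = 3J² − (k+3)L − (1/8)(k+1)(2k+3)·1`, as an element of the free algebra. -/
def fF (k : ℂ) : F :=
  3 * jF ^ 2 - algebraMap ℂ F (k + 3) * lF - algebraMap ℂ F (1/8 * (k + 1) * (2*k + 3))

/-- The defining relations of `A_k`: `L` is central, `[J,G⁺] = G⁺`, `[J,G⁻] = −G⁻`,
`[G⁺,G⁻] = f_k(J,L)`. -/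
inductive Rel (k : ℂ) : F → F → Prop
  | lj : Rel k (lF * jF) (jF * lF)
  | lgp : Rel k (lF * gpF) (gpF * lF)
  | lgm : Rel k (lF * gmF) (gmF * lF)
  | jgp : Rel k (jF * gpF - gpF * jF) gpF
  | jgm : Rel k (jF * gmF - gmF * jF) (-gmF)
  | gpgm : Rel k (gpF * gmF - gmF * gpF) (fF k)

/-- The unital associative `ℂ`-algebra `A_k`: the quotient of the free algebra on
`J, G⁺, G⁻, L` by the two-sided ideal generated by the defining relations. -/
def A (k : ℂ) : Type := RingQuot (Rel k)

instance (k : ℂ) : Ring (A k) := inferInstanceAs (Ring (RingQuot (Rel k)))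
instance (k : ℂ) : Algebra ℂ (A k) := inferInstanceAs (Algebra ℂ (RingQuot (Rel k)))

/-- The quotient map `F →ₐ[ℂ] A_k`. -/
def mk (k : ℂ) : F →ₐ[ℂ] A k := RingQuot.mkAlgHom ℂ (Rel k)

/-- The generator `J` of `A_k`. -/
def J (k : ℂ) : A k := mk k jF
/-- The generator `G⁺` of `A_k`. -/
def Gp (k : ℂ) : A k := mk k gpF
/-- The generator `G⁻` of `A_k`. -/
def Gm (k : ℂ) : A k := mk k gmF
/-- The generator `L` of `A_k`. -/
def L (k : ℂ) : A k := mk k lF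

/-! The algebra `A_k` acts on `ℂ[x₀, x₁, x₂, x₃]` by transporting left multiplication along
`(G⁻)^a J^b L^c (G⁺)^d ↦ x₀^a x₁^b x₂^c x₃^d`: the generators become explicit differential and
shift operators, and checking the defining relations for them is a polynomial identity. Applying
the action of a PBW monomial to `1` returns the corresponding monomial in the `xᵢ`, which gives
linear independence. For spanning, the commutation relations straighten any product of a
generator with a PBW monomial, so the span of the PBW monomials is stable under left
multiplication by the generators; since it contains `1`, it is everything. -/

end BP

namespace Submodule

variable {R A : Type*} [CommSemiring R] [Semiring A] [Algebra R A]

def mulLeftStabilizer (M : Submodule R A) : Subalgebra R A where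
  carrier := {a | ∀ m ∈ M, a * m ∈ M}
  mul_mem' ha hb m hm := by rw [mul_assoc]; exact ha _ (hb m hm)
  add_mem' ha hb m hm := by rw [add_mul]; exact M.add_mem (ha m hm) (hb m hm)
  algebraMap_mem' r m hm := by rw [← Algebra.smul_def]; exact M.smul_mem r hm

theorem mem_mulLeftStabilizer_span {t : Set A} {x : A} (h : ∀ y ∈ t, x * y ∈ span R t) :
    x ∈ (span R t).mulLeftStabilizer :=
  fun _ hm => span_le (p := (span R t).comap (LinearMap.mulLeft R x)) |>.2 h hm

theorem eq_top_of_subset_mulLeftStabilizer {M : Submodule R A} {s : Set A}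
    (hs : Algebra.adjoin R s = ⊤) (hsM : s ⊆ M.mulLeftStabilizer) (h1 : 1 ∈ M) : M = ⊤ := by
  refine eq_top_iff.2 fun a _ => ?_
  have ha : a ∈ M.mulLeftStabilizer := Algebra.adjoin_le hsM (hs ▸ Algebra.mem_top)
  simpa using ha 1 h1

end Submodule

namespace BP

section Spanning

variable (k : ℂ)

theorem mk_eq_of_rel {x y : F} (h : Rel k x y) : mk k x = mk k y := RingQuot.mkAlgHom_rel ℂ h

theorem commute_L_J : Commute (L k) (J k) := by
  have h := mk_eq_of_rel k Rel.lj
  simp only [map_mul] at h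
  exact h

theorem commute_L_Gm : Commute (L k) (Gm k) := by
  have h := mk_eq_of_rel k Rel.lgm
  simp only [map_mul] at h
  exact h

theorem commute_L_Gp : Commute (L k) (Gp k) := by
  have h := mk_eq_of_rel k Rel.lgp
  simp only [map_mul] at h
  exact h

theorem J_mul_Gp : J k * Gp k = Gp k * J k + Gp k := by
  have h := mk_eq_of_rel k Rel.jgp
  simp only [map_mul, map_sub, sub_eq_iff_eq_add'] at h
  exact h

theorem J_mul_Gm : J k * Gm k = Gm k * J k - Gm k := by
  have h := mk_eq_of_rel k Rel.jgm
  simp only [map_mul, map_sub, map_neg, sub_eq_iff_eq_add', ← sub_eq_add_neg] at h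
  exact h

theorem Gp_mul_Gm : Gp k * Gm k = Gm k * Gp k + mk k (fF k) := by
  have h := mk_eq_of_rel k Rel.gpgm
  simp only [map_mul, map_sub, sub_eq_iff_eq_add'] at h
  exact h

theorem adjoin_generators : Algebra.adjoin ℂ {J k, Gp k, Gm k, L k} = ⊤ := by
  have h : ({J k, Gp k, Gm k, L k} : Set (A k)) = mk k '' Set.range (FreeAlgebra.ι ℂ) := by
    ext x
    simp [Fin.exists_fin_succ, J, Gp, Gm, L, jF, gpF, gmF, lF, eq_comm]
  rw [h, Algebra.adjoin_image, FreeAlgebra.adjoin_range_ι, Algebra.map_top,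
    AlgHom.range_eq_top]
  exact RingQuot.mkAlgHom_surjective ℂ (Rel k)

def pbw (q : ℕ × ℕ × ℕ × ℕ) : A k := Gm k ^ q.1 * J k ^ q.2.1 * L k ^ q.2.2.1 * Gp k ^ q.2.2.2

abbrev pbwSpan : Submodule ℂ (A k) := Submodule.span ℂ (Set.range (pbw k))

theorem pbw_mem_pbwSpan (q : ℕ × ℕ × ℕ × ℕ) : pbw k q ∈ pbwSpan k :=
  Submodule.subset_span (Set.mem_range_self q)

theorem Gm_mul_pbw (a b c d : ℕ) : Gm k * pbw k (a, b, c, d) = pbw k (a + 1, b, c, d) := by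
  simp only [pbw, pow_succ', mul_assoc]

theorem L_mul_pbw (a b c d : ℕ) : L k * pbw k (a, b, c, d) = pbw k (a, b, c + 1, d) := by
  simp only [pbw, pow_succ', ← mul_assoc, ((commute_L_Gm k).pow_right a).eq]
  simp only [mul_assoc, ((commute_L_J k).pow_right b).left_comm]

theorem J_mul_Gm_pow (a : ℕ) : J k * Gm k ^ a = Gm k ^ a * J k - (a : ℂ) • Gm k ^ a := by
  induction a with
  | zero => simp
  | succ a ih =>
    rw [pow_succ, ← mul_assoc, ih, sub_mul, mul_assoc, J_mul_Gm, mul_sub, smul_mul_assoc,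
      ← mul_assoc, ← pow_succ, Nat.cast_succ, add_smul, one_smul]
    abel

theorem J_mul_pbw (a b c d : ℕ) :
    J k * pbw k (a, b, c, d) = pbw k (a, b + 1, c, d) - (a : ℂ) • pbw k (a, b, c, d) := by
  simp only [pbw, ← mul_assoc, J_mul_Gm_pow, sub_mul, smul_mul_assoc, pow_succ']

theorem Gp_mul_pbw_zero_zero (c d : ℕ) : Gp k * pbw k (0, 0, c, d) = pbw k (0, 0, c, d + 1) := by
  simp only [pbw, pow_zero, one_mul, ← mul_assoc, ((commute_L_Gp k).pow_left c).eq, pow_succ']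

theorem pbw_zero_succ (b c d : ℕ) : pbw k (0, b + 1, c, d) = J k * pbw k (0, b, c, d) := by
  simp only [pbw, pow_zero, one_mul, pow_succ', mul_assoc]

theorem Gp_mul_J_mul (y : A k) : Gp k * (J k * y) = J k * (Gp k * y) - Gp k * y := by
  rw [← mul_assoc, ← mul_assoc, J_mul_Gp, add_mul, add_sub_cancel_right]

theorem Gp_mul_pbw_succ (a b c d : ℕ) :
    Gp k * pbw k (a + 1, b, c, d)
      = Gm k * (Gp k * pbw k (a, b, c, d)) + mk k (fF k) * pbw k (a, b, c, d) := by
  rw [← Gm_mul_pbw, ← mul_assoc, Gp_mul_Gm, add_mul, mul_assoc]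

theorem J_mem_mulLeftStabilizer : J k ∈ (pbwSpan k).mulLeftStabilizer := by
  refine Submodule.mem_mulLeftStabilizer_span ?_
  rintro _ ⟨⟨a, b, c, d⟩, rfl⟩
  rw [J_mul_pbw]
  exact sub_mem (pbw_mem_pbwSpan k _) (Submodule.smul_mem _ _ (pbw_mem_pbwSpan k _))

theorem L_mem_mulLeftStabilizer : L k ∈ (pbwSpan k).mulLeftStabilizer := by
  refine Submodule.mem_mulLeftStabilizer_span ?_
  rintro _ ⟨⟨a, b, c, d⟩, rfl⟩
  rw [L_mul_pbw]
  exact pbw_mem_pbwSpan k _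

theorem Gm_mem_mulLeftStabilizer : Gm k ∈ (pbwSpan k).mulLeftStabilizer := by
  refine Submodule.mem_mulLeftStabilizer_span ?_
  rintro _ ⟨⟨a, b, c, d⟩, rfl⟩
  rw [Gm_mul_pbw]
  exact pbw_mem_pbwSpan k _

theorem mk_fF_mem_mulLeftStabilizer : mk k (fF k) ∈ (pbwSpan k).mulLeftStabilizer := by
  have h : mk k (fF k) = (3 : ℂ) • J k ^ 2 - (k + 3) • L k
      - algebraMap ℂ (A k) (1/8 * (k + 1) * (2*k + 3)) := by
    simp [fF, J, L, Algebra.smul_def, map_ofNat]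
  rw [h]
  exact sub_mem (sub_mem (Subalgebra.smul_mem _ (pow_mem (J_mem_mulLeftStabilizer k) 2) _)
    (Subalgebra.smul_mem _ (L_mem_mulLeftStabilizer k) _)) (Subalgebra.algebraMap_mem _ _)

theorem Gp_mem_mulLeftStabilizer : Gp k ∈ (pbwSpan k).mulLeftStabilizer := by
  refine Submodule.mem_mulLeftStabilizer_span ?_
  rintro _ ⟨⟨a, b, c, d⟩, rfl⟩
  induction a generalizing b with
  | zero =>
    induction b with
    | zero => rw [Gp_mul_pbw_zero_zero]; exact pbw_mem_pbwSpan k _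
    | succ b ih =>
      rw [pbw_zero_succ, Gp_mul_J_mul]
      exact sub_mem (J_mem_mulLeftStabilizer k _ ih) ih
  | succ a ih =>
    rw [Gp_mul_pbw_succ]
    exact add_mem (Gm_mem_mulLeftStabilizer k _ (ih b))
      (mk_fF_mem_mulLeftStabilizer k _ (pbw_mem_pbwSpan k _))

theorem span_pbw_eq_top : Submodule.span ℂ (Set.range (pbw k)) = ⊤ := by
  refine Submodule.eq_top_of_subset_mulLeftStabilizer (adjoin_generators k) ?_ ?_
  · rintro x (rfl | rfl | rfl | rfl)
    exacts [J_mem_mulLeftStabilizer k, Gp_mem_mulLeftStabilizer k, Gm_mem_mulLeftStabilizer k,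
      L_mem_mulLeftStabilizer k]
  · simpa [pbw] using pbw_mem_pbwSpan k (0, 0, 0, 0)

end Spanning

section Model

open MvPolynomial

abbrev Model : Type := MvPolynomial (Fin 4) ℂ

def shift : Model →ₐ[ℂ] Model := aeval (Function.update X 1 (X 1 - 1))

@[simp] theorem shift_X (i : Fin 4) : shift (X i) = if i = 1 then X 1 - 1 else X i := by
  simp [shift, Function.update_apply]

@[simp] theorem pderiv_ofNat (i : Fin 4) (n : ℕ) [n.AtLeastTwo] :
    pderiv i (ofNat(n) : Model) = 0 := by
  rw [← map_ofNat C n, pderiv_C]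

@[simp] theorem pderiv_shift (p : Model) : pderiv 0 (shift p) = shift (pderiv 0 p) := by
  induction p using MvPolynomial.induction_on with
  | C a => simp [shift]
  | add p q hp hq => simp only [map_add, hp, hq]
  | mul_X p i hp => fin_cases i <;> simp [Derivation.leibniz, hp, pderiv_X]

variable (k : ℂ)

def mulX (i : Fin 4) : Module.End ℂ Model := LinearMap.mulLeft ℂ (X i)

/- `J G⁻^a = G⁻^a (J - a)`, `G⁺ J^b = (J - 1)^b G⁺` and
`G⁺ G⁻^a = G⁻^a G⁺ + G⁻^(a-1) ∑_{j<a} f_k(J - j, L)`, where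
`∑_{j<a} f_k(x - j, y) = a f_k(x, y) - 3a(a-1) x + a(a-1)(a-2) + (3/2) a(a-1)`.
The operators `∂₀`, `x₀∂₀²`, `x₀²∂₀³` send `x₀^a` to `a`, `a(a-1)`, `a(a-1)(a-2)` times
`x₀^(a-1)`. -/
def repJ : Module.End ℂ Model := mulX 1 - mulX 0 * (pderiv 0).toLinearMap

def repGp : Module.End ℂ Model :=
  let D := (pderiv (0 : Fin 4)).toLinearMap
  shift.toLinearMap * mulX 3
    + LinearMap.mulLeft ℂ (3 * X 1 ^ 2 - C (k + 3) * X 2 - C (1/8 * (k + 1) * (2*k + 3))) * D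
    - LinearMap.mulLeft ℂ (3 * X 0 * X 1) * D ^ 2 + LinearMap.mulLeft ℂ (X 0 ^ 2) * D ^ 3
    + LinearMap.mulLeft ℂ (C (3/2) * X 0) * D ^ 2

@[simp] theorem mulX_apply (i : Fin 4) (p : Model) : mulX i p = X i * p := rfl

@[simp] theorem repJ_apply (p : Model) : repJ p = X 1 * p - X 0 * pderiv 0 p := rfl

@[simp] theorem repGp_apply (p : Model) :
    repGp k p = shift (X 3 * p)
      + (3 * X 1 ^ 2 - C (k + 3) * X 2 - C (1/8 * (k + 1) * (2*k + 3))) * pderiv 0 p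
      - 3 * X 0 * X 1 * pderiv 0 (pderiv 0 p) + X 0 ^ 2 * pderiv 0 (pderiv 0 (pderiv 0 p))
      + C (3/2) * X 0 * pderiv 0 (pderiv 0 p) := rfl

def genOps : Fin 4 → Module.End ℂ Model := ![repJ, repGp k, mulX 0, mulX 2]

theorem lift_genOps_rel ⦃x y : F⦄ (h : Rel k x y) :
    FreeAlgebra.lift ℂ (genOps k) x = FreeAlgebra.lift ℂ (genOps k) y := by
  have h32 : (C (3/2 : ℂ) : Model) * 2 = 3 := by
    rw [← map_ofNat C 2, ← map_ofNat C 3, ← map_mul]; norm_num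
  cases h <;>
    simp only [jF, gpF, gmF, lF, fF, genOps, map_mul, map_sub, map_neg, map_pow, map_ofNat,
      AlgHom.commutes, FreeAlgebra.lift_ι_apply, Matrix.cons_val] <;>
    refine LinearMap.ext fun p => ?_ <;>
    simp only [Module.End.mul_apply, LinearMap.add_apply, LinearMap.sub_apply, LinearMap.neg_apply,
      Module.End.one_apply, Module.End.ofNat_apply, Module.algebraMap_end_apply, mulX_apply,
      repJ_apply, repGp_apply, map_zero, map_add, map_sub, map_mul, map_one, map_ofNat,
      nsmul_eq_mul, smul_eq_C_mul, shift_X, pderiv_shift, Derivation.leibniz, smul_eq_mul,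
      pderiv_X, Pi.single_apply, pderiv_C, pderiv_ofNat, Derivation.map_one_eq_zero, pow_two,
      Fin.reduceEq, ↓reduceIte]
  case gpgm => linear_combination (X 0 * pderiv 0 p) * h32
  all_goals ring

def rep : A k →ₐ[ℂ] Module.End ℂ Model :=
  RingQuot.liftAlgHom ℂ ⟨FreeAlgebra.lift ℂ (genOps k), lift_genOps_rel k⟩

theorem rep_mk (x : F) : rep k (mk k x) = FreeAlgebra.lift ℂ (genOps k) x :=
  RingQuot.liftAlgHom_mkAlgHom_apply ℂ _ _ x

@[simp] theorem rep_J : rep k (J k) = repJ := by simp [J, jF, rep_mk, genOps]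
@[simp] theorem rep_Gp : rep k (Gp k) = repGp k := by simp [Gp, gpF, rep_mk, genOps]
@[simp] theorem rep_Gm : rep k (Gm k) = mulX 0 := by simp [Gm, gmF, rep_mk, genOps]
@[simp] theorem rep_L : rep k (L k) = mulX 2 := by simp [L, lF, rep_mk, genOps]

theorem repGp_pow_apply_one (d : ℕ) : (repGp k ^ d) 1 = X 3 ^ d := by
  induction d with
  | zero => simp
  | succ d ih =>
    rw [pow_succ', Module.End.mul_apply, ih]
    simp [Derivation.leibniz_pow, pderiv_X, pow_succ']

theorem repJ_pow_apply (b : ℕ) {q : Model} (hq : pderiv 0 q = 0) :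
    (repJ ^ b) q = X 1 ^ b * q := by
  induction b generalizing q with
  | zero => simp
  | succ b ih =>
    have h1 : repJ q = X 1 * q := by simp [hq]
    have h2 : pderiv 0 (X 1 * q) = 0 := by simp [Derivation.leibniz, hq, pderiv_X]
    rw [pow_succ, Module.End.mul_apply, h1, ih h2, ← mul_assoc, ← pow_succ]

theorem rep_pbw_apply_one (q : ℕ × ℕ × ℕ × ℕ) :
    rep k (pbw k q) 1 = X 0 ^ q.1 * X 1 ^ q.2.1 * X 2 ^ q.2.2.1 * X 3 ^ q.2.2.2 := by
  obtain ⟨a, b, c, d⟩ := q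
  have hq : pderiv 0 (X 2 ^ c * X 3 ^ d : Model) = 0 := by
    simp [Derivation.leibniz_pow, Derivation.leibniz, pderiv_X]
  simp only [pbw, map_mul, map_pow, rep_Gm, rep_J, rep_L, rep_Gp, mulX, LinearMap.pow_mulLeft,
    Module.End.mul_apply, repGp_pow_apply_one, LinearMap.mulLeft_apply, repJ_pow_apply b hq]
  ring

def exponent (q : ℕ × ℕ × ℕ × ℕ) : Fin 4 →₀ ℕ :=
  Finsupp.single 0 q.1 + Finsupp.single 1 q.2.1 + Finsupp.single 2 q.2.2.1
    + Finsupp.single 3 q.2.2.2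

theorem exponent_injective : Function.Injective exponent := by
  rintro ⟨a, b, c, d⟩ ⟨a', b', c', d'⟩ h
  obtain rfl : a = a' := by simpa [exponent] using DFunLike.congr_fun h 0
  obtain rfl : b = b' := by simpa [exponent] using DFunLike.congr_fun h 1
  obtain rfl : c = c' := by simpa [exponent] using DFunLike.congr_fun h 2
  obtain rfl : d = d' := by simpa [exponent] using DFunLike.congr_fun h 3
  rfl

theorem monomial_exponent (q : ℕ × ℕ × ℕ × ℕ) :
    monomial (exponent q) (1 : ℂ) = X 0 ^ q.1 * X 1 ^ q.2.1 * X 2 ^ q.2.2.1 * X 3 ^ q.2.2.2 := by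
  simp [exponent, X_pow_eq_monomial, monomial_mul]

theorem linearIndependent_pbw : LinearIndependent ℂ (pbw k) := by
  refine LinearIndependent.of_comp ((LinearMap.applyₗ (1 : Model)).comp (rep k).toLinearMap) ?_
  have h : (LinearMap.applyₗ (1 : Model)).comp (rep k).toLinearMap ∘ pbw k =
      (fun s => monomial s (1 : ℂ)) ∘ exponent := by
    funext q
    simp [rep_pbw_apply_one, monomial_exponent]
  rw [h, ← coe_basisMonomials]
  exact (basisMonomials (Fin 4) ℂ).linearIndependent.comp exponent exponent_injective

end Model

/-- **PBW basis for `A_k`** (Statement 0): the monomials `(G⁻)^a J^b L^c (G⁺)^d`,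
for `a, b, c, d ∈ ℕ`, form a basis of `A_k` as a `ℂ`-vector space. -/
theorem pbw_basis (k : ℂ) :
    LinearIndependent ℂ
      (fun q : ℕ × ℕ × ℕ × ℕ => Gm k ^ q.1 * J k ^ q.2.1 * L k ^ q.2.2.1 * Gp k ^ q.2.2.2) ∧
    Submodule.span ℂ
      (Set.range
        (fun q : ℕ × ℕ × ℕ × ℕ => Gm k ^ q.1 * J k ^ q.2.1 * L k ^ q.2.2.1 * Gp k ^ q.2.2.2))
      = (⊤ : Submodule ℂ (A k)) :=
  ⟨linearIndependent_pbw k, span_pbw_eq_top k⟩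

end BP
end
end

section
/- There exists a unique ℂ-algebra automorphism σ of A_k satisfying σ(J) = −J, σ(G⁺) = G⁻, σ(G⁻) = −G⁺ and σ(L) = L. Moreover, the element Ω = G⁺G⁻ + G⁻G⁺ + 2J³ + J − 2J((k+3)L + (1/8)(k+1)(2k+3)·1) is central in A_k and satisfies σ(Ω) = −Ω. -/
noncomputable section

namespace BP

/-- The central element `Ω = G⁺G⁻ + G⁻G⁺ + 2J³ + J − 2J((k+3)L + (1/8)(k+1)(2k+3)·1)`. -/
def Omega (k : ℂ) : A k :=
  Gp k * Gm k + Gm k * Gp k + 2 * J k ^ 3 + J k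
    - 2 * J k * (algebraMap ℂ (A k) (k + 3) * L k
        + algebraMap ℂ (A k) (1/8 * (k + 1) * (2*k + 3)))

/-! Put `u = (k+3)L + (1/8)(k+1)(2k+3)`, a central element, so that `f_k(J, L) = 3J² − u` and
`Ω = G⁺G⁻ + G⁻G⁺ + 2J³ + J − 2Ju`.

Algebra maps out of `A_k` are quadruples satisfying the defining relations. The quadruple
`(−J, G⁻, −G⁺, L)` satisfies them, which gives `σ`; since `σ⁴` fixes the generators, `σ` is an
automorphism with inverse `σ³`, and it is unique because it is prescribed on generators.
The expression for `Ω` changes sign under this substitution by itself, so `σ(Ω) = −Ω`.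
`Ω` commutes with `J` since `G⁺G⁻` and `G⁻G⁺` have weight zero, and with `G⁺` by a direct
computation with the relations; applying `σ` to the latter gives commutation with `G⁻`, and `L`
is central. -/

section Relations

variable {B C : Type*} [Ring B] [Algebra ℂ B] [Ring C] [Algebra ℂ C] (k : ℂ)

def u (l : B) : B :=
  algebraMap ℂ B (k + 3) * l + algebraMap ℂ B (1/8 * (k + 1) * (2*k + 3))

def casimir (j gp gm l : B) : B :=
  gp * gm + gm * gp + 2 * j ^ 3 + j - 2 * j * u k l

structure SatisfiesRelations (j gp gm l : B) : Prop where
  commute_l_j : Commute l j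
  commute_l_gp : Commute l gp
  commute_l_gm : Commute l gm
  j_gp : j * gp - gp * j = gp
  j_gm : j * gm - gm * j = -gm
  gp_gm : gp * gm - gm * gp = 3 * j ^ 2 - u k l

variable {k}

lemma map_u {F : Type*} [FunLike F B C] [AlgHomClass F ℂ B C] (φ : F) (l : B) :
    φ (u k l) = u k (φ l) := by
  simp only [u, map_add, map_mul, AlgHomClass.commutes]

lemma map_casimir {F : Type*} [FunLike F B C] [AlgHomClass F ℂ B C] (φ : F) (j gp gm l : B) :
    φ (casimir k j gp gm l) = casimir k (φ j) (φ gp) (φ gm) (φ l) := by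
  simp only [casimir, map_sub, map_add, map_mul, map_pow, map_ofNat, map_u]

lemma casimir_conj (j gp gm l : B) : casimir k (-j) gm (-gp) l = -casimir k j gp gm l := by
  simp only [casimir]; noncomm_ring

lemma commute_u {l x : B} (h : Commute l x) : Commute (u k l) x :=
  ((Algebra.commute_algebraMap_left _ x).mul_left h).add_left (Algebra.commute_algebraMap_left _ x)

namespace SatisfiesRelations

variable {j gp gm l : B} (h : SatisfiesRelations k j gp gm l)
include h

lemma conj : SatisfiesRelations k (-j) gm (-gp) l where
  commute_l_j := h.commute_l_j.neg_right
  commute_l_gp := h.commute_l_gm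
  commute_l_gm := h.commute_l_gp.neg_right
  j_gp := by linear_combination (norm := noncomm_ring) -h.j_gm
  j_gm := by linear_combination (norm := noncomm_ring) h.j_gp
  gp_gm := by linear_combination (norm := noncomm_ring) h.gp_gm

lemma commute_casimir_j : Commute (casimir k j gp gm l) j := by
  have hu := (commute_u (k := k) h.commute_l_j).eq
  unfold Commute SemiconjBy casimir
  linear_combination (norm := noncomm_ring)
    -gp * h.j_gm - h.j_gp * gm - gm * h.j_gp - h.j_gm * gp - 2 * j * hu

-- Expand `[G⁺², G⁻] = G⁺f + fG⁺` and `[J³, G⁺] = J²G⁺ + JG⁺J + G⁺J²`; what is left is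
-- `[J, [J, G⁺]] = G⁺`.
lemma commute_casimir_gp : Commute (casimir k j gp gm l) gp := by
  have hu := (commute_u (k := k) h.commute_l_gp).eq
  unfold Commute SemiconjBy casimir
  linear_combination (norm := noncomm_ring) -gp * h.gp_gm - h.gp_gm * gp + 2 * j ^ 2 * h.j_gp
    + 2 * j * h.j_gp * j + 2 * h.j_gp * j ^ 2 - 2 * h.j_gp * u k l - j * h.j_gp + h.j_gp * j
    - 2 * j * hu + hu

lemma commute_casimir_gm : Commute (casimir k j gp gm l) gm := by
  simpa only [casimir_conj, Commute.neg_left_iff] using h.conj.commute_casimir_gp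

end SatisfiesRelations
end Relations

section Presentation

variable {B : Type*} [Ring B] [Algebra ℂ B] {k : ℂ}

lemma map_fF (φ : F →ₐ[ℂ] B) : φ (fF k) = 3 * φ jF ^ 2 - u k (φ lF) := by
  simp only [fF, u, sub_sub, map_sub, map_add, map_mul, map_pow, map_ofNat, AlgHom.commutes]

lemma respects_rel_iff (φ : F →ₐ[ℂ] B) :
    (∀ ⦃x y⦄, Rel k x y → φ x = φ y) ↔
      SatisfiesRelations k (φ jF) (φ gpF) (φ gmF) (φ lF) := by
  constructor
  · intro h
    constructor <;>
      simp only [Commute, SemiconjBy, ← map_mul, ← map_sub, ← map_neg, ← map_fF] <;>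
      exact h (by constructor)
  · rintro ⟨hlj, hlgp, hlgm, hjgp, hjgm, hgpgm⟩ x y (_ | _ | _ | _ | _ | _) <;>
      simp only [map_mul, map_sub, map_neg, map_fF] <;> assumption

lemma satisfiesRelations_generators (k : ℂ) :
    SatisfiesRelations k (J k) (Gp k) (Gm k) (L k) :=
  (respects_rel_iff (mk k)).mp fun _ _ => RingQuot.mkAlgHom_rel ℂ

variable {j gp gm l : B}

def lift (h : SatisfiesRelations k j gp gm l) : A k →ₐ[ℂ] B :=
  RingQuot.liftAlgHom ℂ ⟨FreeAlgebra.lift ℂ ![j, gp, gm, l], (respects_rel_iff _).mpr <| by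
    simpa [jF, gpF, gmF, lF] using h⟩

section
variable (h : SatisfiesRelations k j gp gm l)

@[simp] lemma lift_J : lift h (J k) = j :=
  (RingQuot.liftAlgHom_mkAlgHom_apply ℂ _ _ jF).trans (by simp [jF])
@[simp] lemma lift_Gp : lift h (Gp k) = gp :=
  (RingQuot.liftAlgHom_mkAlgHom_apply ℂ _ _ gpF).trans (by simp [gpF])
@[simp] lemma lift_Gm : lift h (Gm k) = gm :=
  (RingQuot.liftAlgHom_mkAlgHom_apply ℂ _ _ gmF).trans (by simp [gmF])
@[simp] lemma lift_L : lift h (L k) = l :=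
  (RingQuot.liftAlgHom_mkAlgHom_apply ℂ _ _ lF).trans (by simp [lF])

end

@[ext]
lemma algHom_ext {f g : A k →ₐ[ℂ] B} (hJ : f (J k) = g (J k)) (hGp : f (Gp k) = g (Gp k))
    (hGm : f (Gm k) = g (Gm k)) (hL : f (L k) = g (L k)) : f = g := by
  refine RingQuot.ringQuot_ext' ℂ _ _ (FreeAlgebra.hom_ext (funext fun i => ?_))
  fin_cases i
  exacts [hJ, hGp, hGm, hL]

end Presentation

lemma commute_of_commute_generators {k : ℂ} {z : A k} (hJ : Commute z (J k))
    (hGp : Commute z (Gp k)) (hGm : Commute z (Gm k)) (hL : Commute z (L k)) (x : A k) :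
    Commute z x := by
  obtain ⟨x, rfl⟩ : ∃ y, mk k y = x := RingQuot.mkAlgHom_surjective ℂ (Rel k) x
  induction x using FreeAlgebra.induction with
  | grade0 r => simpa only [AlgHom.commutes] using Algebra.commute_algebraMap_right r z
  | grade1 i => fin_cases i <;> assumption
  | mul a b ha hb => simpa only [map_mul] using ha.mul_right hb
  | add a b ha hb => simpa only [map_add] using ha.add_right hb

lemma commute_L (k : ℂ) (x : A k) : Commute (L k) x :=
  have h := satisfiesRelations_generators k
  commute_of_commute_generators h.commute_l_j h.commute_l_gp h.commute_l_gm (.refl _) x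

lemma Omega_eq_casimir (k : ℂ) : Omega k = casimir k (J k) (Gp k) (Gm k) (L k) := rfl

lemma commute_Omega (k : ℂ) (x : A k) : Commute (Omega k) x :=
  have h := satisfiesRelations_generators k
  Omega_eq_casimir k ▸ commute_of_commute_generators h.commute_casimir_j h.commute_casimir_gp
    h.commute_casimir_gm (commute_L k _).symm x

def conjHom (k : ℂ) : A k →ₐ[ℂ] A k := lift (satisfiesRelations_generators k).conj

def conjEquiv (k : ℂ) : A k ≃ₐ[ℂ] A k :=
  AlgEquiv.ofAlgHom (conjHom k) ((conjHom k).comp ((conjHom k).comp (conjHom k)))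
    (by ext <;> simp [conjHom]) (by ext <;> simp [conjHom])

/-- there is a unique `ℂ`-algebra automorphism `σ` of `A_k` with
`σ(J) = −J`, `σ(G⁺) = G⁻`, `σ(G⁻) = −G⁺`, `σ(L) = L`; moreover `Ω` is central in `A_k`
and every such `σ` satisfies `σ(Ω) = −Ω`. -/
theorem conjugation_automorphism (k : ℂ) :
    (∃! σ : A k ≃ₐ[ℂ] A k,
        σ (J k) = -J k ∧ σ (Gp k) = Gm k ∧ σ (Gm k) = -Gp k ∧ σ (L k) = L k) ∧
    (∀ x : A k, Omega k * x = x * Omega k) ∧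
    (∀ σ : A k ≃ₐ[ℂ] A k,
        σ (J k) = -J k → σ (Gp k) = Gm k → σ (Gm k) = -Gp k → σ (L k) = L k →
        σ (Omega k) = -Omega k) := by
  refine ⟨⟨conjEquiv k, by simp [conjEquiv, conjHom], ?_⟩, commute_Omega k, ?_⟩
  · rintro σ ⟨hJ, hGp, hGm, hL⟩
    refine AlgEquiv.coe_toAlgHom_injective (algHom_ext ?_ ?_ ?_ ?_) <;>
      simp [conjEquiv, conjHom, hJ, hGp, hGm, hL]
  · intro σ hJ hGp hGm hL
    rw [Omega_eq_casimir, map_casimir, hJ, hGp, hGm, hL, casimir_conj]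

end BP
end
end

section
/- For all j, Δ, ω ∈ ℂ, the σ-twist of the A_k-module R_{j,Δ,ω} is isomorphic to R_{−j,Δ,−ω}. -/
noncomputable section

namespace BP

/-- The left ideal of `A_k` by which one quotients to obtain the induced module
`R_{j,Δ,ω} = A_k ⊗_{C_k} ℂ_{j,Δ,ω}`: it is generated by `J − j·1`, `L − Δ·1` and
`Ω − ω·1`. -/
def denseIdeal (k j Δ ω : ℂ) : Submodule (A k) (A k) :=
  Submodule.span (A k)
    {J k - algebraMap ℂ (A k) j, L k - algebraMap ℂ (A k) Δ,
      Omega k - algebraMap ℂ (A k) ω}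

/-- The induced module `R_{j,Δ,ω} = A_k ⊗_{C_k} ℂ_{j,Δ,ω}`, realised as the quotient
`A_k / A_k·(J−j, L−Δ, Ω−ω)`. -/
abbrev Rmod (k j Δ ω : ℂ) : Type := A k ⧸ denseIdeal k j Δ ω

/-- The generating vector `v = 1 ⊗ 1` of `R_{j,Δ,ω}`. -/
def rv (k j Δ ω : ℂ) : Rmod k j Δ ω := Submodule.Quotient.mk (1 : A k)

/-- `ω⁺_{j,Δ} = (2j+1)(j(j+1) − (k+3)Δ − (1/8)(k+1)(2k+3))`. -/
def omegaP (k j Δ : ℂ) : ℂ :=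
  (2*j + 1) * (j*(j + 1) - (k + 3)*Δ - 1/8 * (k + 1) * (2*k + 3))

/-- `ω⁻_{j,Δ} = (2j−1)(j(j−1) − (k+3)Δ − (1/8)(k+1)(2k+3))`. -/
def omegaM (k j Δ : ℂ) : ℂ :=
  (2*j - 1) * (j*(j - 1) - (k + 3)*Δ - 1/8 * (k + 1) * (2*k + 3))

/-- The `σ`-twist `σ*(M)` of an `A_k`-module `M`: the same underlying abelian group,
with the action `a ⋆ m = σ⁻¹(a) • m`. -/
def Twist (k : ℂ) (_σ : A k ≃ₐ[ℂ] A k) (M : Type) [AddCommGroup M] [Module (A k) M] :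
    Type := M

instance (k : ℂ) (σ : A k ≃ₐ[ℂ] A k) (M : Type) [AddCommGroup M] [Module (A k) M] :
    AddCommGroup (Twist k σ M) := inferInstanceAs (AddCommGroup M)

instance (k : ℂ) (σ : A k ≃ₐ[ℂ] A k) (M : Type) [AddCommGroup M] [Module (A k) M] :
    Module (A k) (Twist k σ M) :=
  Module.compHom M (σ.symm.toAlgHom.toRingHom)

/-! The twist of a cyclic module `A_k ⧸ I` by an automorphism `σ` is `A_k ⧸ σ(I)`, via
`[a] ↦ [σ a]`. The conjugation sends `J ↦ −J`, `L ↦ L` and `Ω ↦ −Ω`, so it carries the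
generators `J − j`, `L − Δ`, `Ω − ω` of the ideal defining `R_{j,Δ,ω}` to
`−(J + j)`, `L − Δ`, `−(Ω + ω)`, which generate the ideal defining `R_{−j,Δ,−ω}`. -/

section

variable {k : ℂ}

theorem map_Omega_of_conj (σ : A k →ₐ[ℂ] A k)
    (hJ : σ (J k) = -J k) (hGp : σ (Gp k) = Gm k) (hGm : σ (Gm k) = -Gp k)
    (hL : σ (L k) = L k) : σ (Omega k) = -Omega k := by
  simp only [Omega, map_add, map_sub, map_mul, map_pow, hJ, hGp, hGm, hL, AlgHom.commutes,
    map_ofNat]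
  noncomm_ring

theorem map_denseIdeal_of_conj (σ : A k →ₐ[ℂ] A k) (j Δ ω : ℂ)
    (hJ : σ (J k) = -J k) (hL : σ (L k) = L k) (hΩ : σ (Omega k) = -Omega k) :
    Ideal.map σ (denseIdeal k j Δ ω) = denseIdeal k (-j) Δ (-ω) := by
  have hJj : σ (J k - algebraMap ℂ (A k) j) = -(J k - algebraMap ℂ (A k) (-j)) := by
    rw [map_sub, hJ, AlgHom.commutes, map_neg]; abel
  have hLΔ : σ (L k - algebraMap ℂ (A k) Δ) = L k - algebraMap ℂ (A k) Δ := by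
    rw [map_sub, hL, AlgHom.commutes]
  have hΩω : σ (Omega k - algebraMap ℂ (A k) ω) = -(Omega k - algebraMap ℂ (A k) (-ω)) := by
    rw [map_sub, hΩ, AlgHom.commutes, map_neg]; abel
  rw [denseIdeal, denseIdeal, ← Ideal.span, Ideal.map_span, Set.image_insert_eq,
    Set.image_insert_eq, Set.image_singleton, hJj, hLΔ, hΩω, Ideal.span_insert_neg,
    Ideal.span_insert, Ideal.span_pair_neg, ← Ideal.span_insert]

attribute [local instance] RingHomInvPair.of_ringEquiv RingHomInvPair.of_ringEquiv_symm

variable (σ : A k ≃ₐ[ℂ] A k)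

def Twist.linearEquivOfSemilinearEquiv {M N : Type} [AddCommGroup M] [Module (A k) M]
    [AddCommGroup N] [Module (A k) N] (e : M ≃ₛₗ[(σ.toRingEquiv : A k →+* A k)] N) :
    Twist k σ M ≃ₗ[A k] N where
  __ := e.toAddEquiv
  map_smul' a m := (e.map_smul' (σ.symm a) m).trans (by simp)

def quotientSemilinearEquivQuotientMap (I : Ideal (A k)) :
    (A k ⧸ I) ≃ₛₗ[(σ.toRingEquiv : A k →+* A k)] A k ⧸ Ideal.map σ I :=
  Submodule.Quotient.equiv I _ σ.toRingEquiv.toSemilinearEquiv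
    (Ideal.map_eq_submodule_map _ I).symm

end

/-- for the conjugation automorphism `σ` (determined by `σ(J) = −J`,
`σ(G⁺) = G⁻`, `σ(G⁻) = −G⁺`, `σ(L) = L`), the `σ`-twist of `R_{j,Δ,ω}` is isomorphic to
`R_{−j,Δ,−ω}`. -/
theorem twist_dense_iso (k j Δ ω : ℂ) (σ : A k ≃ₐ[ℂ] A k)
    (h1 : σ (J k) = -J k) (h2 : σ (Gp k) = Gm k) (h3 : σ (Gm k) = -Gp k)
    (h4 : σ (L k) = L k) :
    Nonempty (Twist k σ (Rmod k j Δ ω) ≃ₗ[A k] Rmod k (-j) Δ (-ω)) := by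
  have hΩ := map_Omega_of_conj σ.toAlgHom h1 h2 h3 h4
  have hI := map_denseIdeal_of_conj σ.toAlgHom j Δ ω h1 h4 hΩ
  exact ⟨(Twist.linearEquivOfSemilinearEquiv σ (quotientSemilinearEquivQuotientMap σ _)).trans
    (Submodule.quotEquivOfEq _ _ hI)⟩

end BP
end
end

section
/- Let u ≥ 3 and v ≥ 2 be coprime integers and set k = −3 + u/v. Then the map S_{u,v} → ℚ × ℚ sending λ to (j(λ), Δ(λ)) is injective: distinct surviving weights give distinct pairs (j, Δ). -/
namespace BPW

/-- A triple of natural numbers `(a₀, a₁, a₂)` (the Dynkin labels of a dominant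
integral `sl₃` weight). -/
abbrev Triple : Type := ℕ × ℕ × ℕ

/-- A weight `λ = (λ^I, λ^F)` consisting of an integral part and a fractional part. -/
abbrev Wt : Type := Triple × Triple

/-- The sum `a₀ + a₁ + a₂` of the entries of a triple. -/
def sumT (a : Triple) : ℕ := a.1 + a.2.1 + a.2.2

/-- `λ = (λ^I, λ^F)` is a *surviving weight* if `λ^I ∈ P^{u−3}`, `λ^F ∈ P^{v−1}`
and `λ^F₀ ≥ 1`. -/
def Surviving (u v : ℕ) (w : Wt) : Prop :=
  sumT w.1 = u - 3 ∧ sumT w.2 = v - 1 ∧ 1 ≤ w.2.1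

/-- `λ ∈ Γ_{u,v}` iff `λ` is surviving and `λ^F₁ ≥ 1`. -/
def InGamma (u v : ℕ) (w : Wt) : Prop :=
  Surviving u v w ∧ 1 ≤ w.2.2.1

/-- The level `k = −3 + u/v`. -/
def kQ (u v : ℕ) : ℚ := -3 + (u : ℚ) / (v : ℚ)

/-- The Dynkin label `λ₁ = λ^I₁ − (u/v)·λ^F₁`. -/
def dyn1 (u v : ℕ) (w : Wt) : ℚ := (w.1.2.1 : ℚ) - (u : ℚ) / (v : ℚ) * (w.2.2.1 : ℚ)

/-- The Dynkin label `λ₂ = λ^I₂ − (u/v)·λ^F₂`. -/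
def dyn2 (u v : ℕ) (w : Wt) : ℚ := (w.1.2.2 : ℚ) - (u : ℚ) / (v : ℚ) * (w.2.2.2 : ℚ)

/-- The charge `j(λ) = (λ₁ − λ₂)/3`. -/
def jwt (u v : ℕ) (w : Wt) : ℚ := (dyn1 u v w - dyn2 u v w) / 3

/-- The conformal weight
`Δ(λ) = [(λ₁−λ₂)² − 3(λ₁+λ₂)(2(k+1)−λ₁−λ₂)]/(12(k+3))`. -/
def Dwt (u v : ℕ) (w : Wt) : ℚ :=
  ((dyn1 u v w - dyn2 u v w) ^ 2
      - 3 * (dyn1 u v w + dyn2 u v w) * (2 * (kQ u v + 1) - dyn1 u v w - dyn2 u v w))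
    / (12 * (kQ u v + 3))

/-- The twisted charge `j^tw(λ) = (λ₁ − λ₂)/3 + (2k+3)/6`. -/
def jtw (u v : ℕ) (w : Wt) : ℚ := jwt u v w + (2 * kQ u v + 3) / 6

/-- The twisted conformal weight `Δ^tw(λ) = Δ(λ) + (λ₁ − λ₂)/6 + (2k+3)/24`. -/
def Dtw (u v : ℕ) (w : Wt) : ℚ :=
  Dwt u v w + (dyn1 u v w - dyn2 u v w) / 6 + (2 * kQ u v + 3) / 24

/-- `ω(λ) = −(2/27)(λ₁−λ₂+k+3)(2λ₁+λ₂−k)(λ₁+2λ₂−2k−3)`. -/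
def omg (u v : ℕ) (w : Wt) : ℚ :=
  -(2/27) * (dyn1 u v w - dyn2 u v w + kQ u v + 3)
    * (2 * dyn1 u v w + dyn2 u v w - kQ u v)
    * (dyn1 u v w + 2 * dyn2 u v w - 2 * kQ u v - 3)

/-!
Equal charges give `λ₁ - λ₂ = λ₁' - λ₂'`; for fixed `λ₁ - λ₂` the conformal weight is a quadratic
in `S = λ₁ + λ₂` symmetric about `k + 1`, so either `S = S'` or `S + S' = 2(k + 1)`.
Each relation has the form `m - (u/v) n = 0` with integers `m, n`, and coprimality gives `v ∣ n`;
for surviving weights `λ^F₁ + λ^F₂ ≤ v - 2`, so the relevant `n` lie strictly between `-v` and `v`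
and must vanish. If `S = S'` this identifies both labels, hence the weights. If `S + S' = 2(k + 1)`
it forces `λ^F₁ + λ^F₂ + λ'^F₁ + λ'^F₂ = v - 2` and `λ^I₁ + λ^I₂ + λ'^I₁ + λ'^I₂ = u - 4`, and the
equal charges then make both sums even, so `2` divides both `u` and `v`.
-/

variable {u v : ℕ}

lemma eq_zero_of_sub_div_mul_eq_zero (hcop : Nat.Coprime u v) {m n : ℤ} (hn : |n| < v)
    (h : (m : ℚ) - u / v * n = 0) : m = 0 ∧ n = 0 := by
  have hv : (v : ℚ) ≠ 0 := by
    have : (0 : ℤ) < v := (abs_nonneg n).trans_lt hn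
    exact_mod_cast this.ne'
  have hmul : (v : ℤ) * m = u * n := by
    field_simp at h
    exact_mod_cast (by linarith : (v : ℚ) * m = u * n)
  have hn0 : n = 0 := Int.eq_zero_of_abs_lt_dvd
    ((Nat.isCoprime_iff_coprime.mpr hcop).symm.dvd_of_dvd_mul_left ⟨m, hmul.symm⟩) hn
  refine ⟨?_, hn0⟩
  rw [hn0, mul_zero] at hmul
  exact (mul_eq_zero.mp hmul).resolve_left (by exact_mod_cast hv)

lemma eq_of_sub_div_mul_eq (hcop : Nat.Coprime u v) {x y x' y' : ℕ} (hy : y < v) (hy' : y' < v)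
    (h : (x : ℚ) - u / v * y = x' - u / v * y') : x = x' ∧ y = y' := by
  have := eq_zero_of_sub_div_mul_eq_zero hcop (m := x - x') (n := y - y')
    (abs_lt.mpr ⟨by omega, by omega⟩) (by push_cast; linarith)
  omega

lemma Surviving.frac_add_two_le {w : Wt} (hw : Surviving u v w) : w.2.2.1 + w.2.2.2 + 2 ≤ v := by
  obtain ⟨-, hy, hy0⟩ := hw
  unfold sumT at hy
  omega

lemma kQ_add_three_ne_zero (hu : u ≠ 0) (hv : v ≠ 0) : kQ u v + 3 ≠ 0 := by
  unfold kQ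
  simp [hu, hv]

lemma dyn_sum_eq_or_add_eq_of_jwt_eq_of_Dwt_eq {w w' : Wt} (hk : kQ u v + 3 ≠ 0)
    (hj : jwt u v w = jwt u v w') (hD : Dwt u v w = Dwt u v w') :
    dyn1 u v w + dyn2 u v w = dyn1 u v w' + dyn2 u v w' ∨
      dyn1 u v w + dyn2 u v w + (dyn1 u v w' + dyn2 u v w') = 2 * (kQ u v + 1) := by
  unfold jwt at hj
  unfold Dwt at hD
  rw [div_left_inj' (mul_ne_zero (by norm_num) hk)] at hD
  set S := dyn1 u v w + dyn2 u v w
  set S' := dyn1 u v w' + dyn2 u v w'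
  have : (S - S') * (S + S' - 2 * (kQ u v + 1)) = 0 := by
    linear_combination (1 / 3) * hD - (dyn1 u v w - dyn2 u v w + (dyn1 u v w' - dyn2 u v w')) * hj
  rcases mul_eq_zero.mp this with h | h
  · exact .inl (by linarith)
  · exact .inr (by linarith)

lemma eq_of_dyn_eq (hcop : Nat.Coprime u v) {w w' : Wt} (hw : Surviving u v w)
    (hw' : Surviving u v w') (h1 : dyn1 u v w = dyn1 u v w') (h2 : dyn2 u v w = dyn2 u v w') :
    w = w' := by
  have hF := hw.frac_add_two_le
  have hF' := hw'.frac_add_two_le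
  obtain ⟨hx1, hy1⟩ := eq_of_sub_div_mul_eq hcop (by omega) (by omega) h1
  obtain ⟨hx2, hy2⟩ := eq_of_sub_div_mul_eq hcop (by omega) (by omega) h2
  obtain ⟨⟨x0, x1, x2⟩, ⟨y0, y1, y2⟩⟩ := w
  obtain ⟨⟨a0, a1, a2⟩, ⟨b0, b1, b2⟩⟩ := w'
  obtain ⟨hx, hy, -⟩ := hw
  obtain ⟨ha, hb, -⟩ := hw'
  simp only [sumT] at hx hy ha hb hx1 hx2 hy1 hy2 ⊢
  simp only [Prod.mk.injEq]
  omega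

lemma dyn_sum_add_ne_of_jwt_eq (hcop : Nat.Coprime u v) {w w' : Wt} (hw : Surviving u v w)
    (hw' : Surviving u v w') (hj : jwt u v w = jwt u v w') :
    dyn1 u v w + dyn2 u v w + (dyn1 u v w' + dyn2 u v w') ≠ 2 * (kQ u v + 1) := by
  intro h
  have hF := hw.frac_add_two_le
  have hF' := hw'.frac_add_two_le
  have hv : (v : ℚ) ≠ 0 := Nat.cast_ne_zero.mpr (by omega)
  obtain ⟨⟨x0, x1, x2⟩, ⟨y0, y1, y2⟩⟩ := w
  obtain ⟨⟨a0, a1, a2⟩, ⟨b0, b1, b2⟩⟩ := w'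
  simp only [jwt, dyn1, dyn2, kQ] at h hj hF hF'
  have hsum := eq_zero_of_sub_div_mul_eq_zero hcop
    (m := x1 + x2 + a1 + a2 + 4 - u) (n := y1 + y2 + b1 + b2 + 2 - v)
    (abs_lt.mpr ⟨by omega, by omega⟩)
    (by push_cast; linear_combination h + div_mul_cancel₀ (u : ℚ) hv)
  have hdiff := eq_zero_of_sub_div_mul_eq_zero hcop
    (m := x1 - x2 - a1 + a2) (n := y1 - y2 - b1 + b2)
    (abs_lt.mpr ⟨by omega, by omega⟩) (by push_cast; linear_combination 3 * hj)
  exact Nat.not_coprime_of_dvd_of_dvd one_lt_two (by omega) (by omega) hcop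

theorem j_Delta_injective_general (u v : ℕ) (hcop : Nat.Coprime u v)
    (w w' : Wt) (hw : Surviving u v w) (hw' : Surviving u v w')
    (hj : jwt u v w = jwt u v w') (hD : Dwt u v w = Dwt u v w') :
    w = w' := by
  have hv := hw.frac_add_two_le
  have hu : u ≠ 0 := by
    rintro rfl
    rw [Nat.coprime_zero_left] at hcop
    omega
  rcases dyn_sum_eq_or_add_eq_of_jwt_eq_of_Dwt_eq (kQ_add_three_ne_zero hu (by omega)) hj hD
    with hS | hS
  · have hdiff : dyn1 u v w - dyn2 u v w = dyn1 u v w' - dyn2 u v w' := by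
      unfold jwt at hj; linarith
    exact eq_of_dyn_eq hcop hw hw' (by linarith) (by linarith)
  · exact absurd hS (dyn_sum_add_ne_of_jwt_eq hcop hw hw' hj)

/-- the map `S_{u,v} → ℚ × ℚ`, `λ ↦ (j(λ), Δ(λ))`, is injective. -/
theorem j_Delta_injective (u v : ℕ) (hu : 3 ≤ u) (hv : 2 ≤ v) (hcop : Nat.Coprime u v)
    (w w' : Wt) (hw : Surviving u v w) (hw' : Surviving u v w')
    (hj : jwt u v w = jwt u v w') (hD : Dwt u v w = Dwt u v w') :
    w = w' :=
  j_Delta_injective_general u v hcop w w' hw hw' hj hD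

end BPW
end

section
/- Let u ≥ 3 and v ≥ 2 be coprime integers, k = −3 + u/v, and let λ ∈ S_{u,v}. With j = j^tw(λ) and Δ = Δ^tw(λ), one has the factorisation h_k^n(j, Δ) = n(n − λ₁ − 1)(n + λ₂ + 1 − u/v) for all n. Consequently, there exists an integer n ≥ 1 with h_k^n(j, Δ) = 0 if and only if λ^F_1 = 0, and in that case the minimal such n equals λ^I_1 + 1. -/
/-!
The cubic `g n = n (n - λ₁ - 1) (n + λ₂ + 1 - u/v)` vanishes at `n = 0` and its forward
difference `g (m + 1) - g m` is `f_k (j - m, Δ)` for the twisted `j, Δ`, so `h_k^n = g n`.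
For `n ≥ 1` the factor `n - λ₁ - 1` vanishes only if `(u/v) λ^F₁` is an integer, which by
coprimality means `v ∣ λ^F₁ < v`, i.e. `λ^F₁ = 0`; the factor `n + λ₂ + 1 - u/v` would need
`v ∣ λ^F₂ + 1`, impossible since `0 < λ^F₂ + 1 < v` for a surviving weight.
-/

namespace BPW

/-- `f_k(x, y) = 3x² − (k+3)y − (1/8)(k+1)(2k+3)`, over `ℚ`. -/
def fQ (k x y : ℚ) : ℚ := 3 * x ^ 2 - (k + 3) * y - 1/8 * (k + 1) * (2*k + 3)

/-- `h_k^n(j, Δ) = Σ_{m=0}^{n−1} f_k(j−m, Δ)`, over `ℚ`. -/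
def hQ (k : ℚ) (n : ℕ) (j Δ : ℚ) : ℚ := ∑ m ∈ Finset.range n, fQ k (j - m) Δ

theorem hQ_twisted_eq (k l₁ l₂ : ℚ) (hk : k + 3 ≠ 0) (n : ℕ) :
    hQ k n ((l₁ - l₂) / 3 + (2 * k + 3) / 6)
        (((l₁ - l₂) ^ 2 - 3 * (l₁ + l₂) * (2 * (k + 1) - l₁ - l₂)) / (12 * (k + 3))
          + (l₁ - l₂) / 6 + (2 * k + 3) / 24)
      = n * (n - l₁ - 1) * (n + l₂ + 1 - (k + 3)) := by
  refine Finset.sum_range_induction _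
    (fun n : ℕ => (n : ℚ) * (n - l₁ - 1) * (n + l₂ + 1 - (k + 3))) (by simp) n (fun m _ => ?_)
  simp only [fQ, Nat.cast_succ]
  field_simp
  ring

theorem hQ_jtw_Dtw_eq {u v : ℕ} (hu : u ≠ 0) (hv : v ≠ 0) (w : Wt) (n : ℕ) :
    hQ (kQ u v) n (jtw u v w) (Dtw u v w)
      = n * ((n : ℚ) - dyn1 u v w - 1) * ((n : ℚ) + dyn2 u v w + 1 - (u : ℚ) / (v : ℚ)) := by
  have hk : kQ u v + 3 = u / v := by rw [kQ]; ring
  rw [jtw, jwt, Dtw, Dwt, ← hk]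
  exact hQ_twisted_eq _ _ _ (by rw [hk]; positivity) n

theorem _root_.Nat.Coprime.dvd_of_div_mul_eq_intCast {u v b : ℕ} (hcop : u.Coprime v)
    (hv : v ≠ 0) {z : ℤ} (h : (u : ℚ) / v * b = z) : v ∣ b := by
  have hz : (u * b : ℤ) = z * v := by
    rw [div_mul_eq_mul_div, div_eq_iff (by positivity)] at h
    exact_mod_cast h
  have : (v : ℤ) ∣ u * b := ⟨z, by rw [hz, mul_comm]⟩
  exact Int.natCast_dvd_natCast.mp
    ((Nat.isCoprime_iff_coprime.mpr hcop.symm).dvd_of_dvd_mul_left this)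

namespace Surviving

variable {u v : ℕ} {w : Wt}

theorem one_lt (hw : Surviving u v w) : 1 < v := by
  obtain ⟨-, hF, hF0⟩ := hw
  unfold sumT at hF
  omega

theorem ne_zero (hw : Surviving u v w) : v ≠ 0 :=
  Nat.ne_zero_of_lt hw.one_lt

theorem fractional_one_lt (hw : Surviving u v w) : w.2.2.1 < v := by
  obtain ⟨-, hF, hF0⟩ := hw
  unfold sumT at hF
  omega

theorem fractional_two_add_one_lt (hw : Surviving u v w) : w.2.2.2 + 1 < v := by
  obtain ⟨-, hF, hF0⟩ := hw
  unfold sumT at hF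
  omega

theorem ne_zero_of_coprime (hw : Surviving u v w) (hcop : u.Coprime v) : u ≠ 0 := by
  rintro rfl
  have := hw.one_lt
  rw [Nat.coprime_zero_left] at hcop
  omega

theorem natCast_sub_dyn1_sub_one_eq_zero_iff (hw : Surviving u v w) (hcop : u.Coprime v)
    (n : ℕ) : (n : ℚ) - dyn1 u v w - 1 = 0 ↔ w.2.2.1 = 0 ∧ n = w.1.2.1 + 1 := by
  constructor
  · intro h
    have hdvd : v ∣ w.2.2.1 := hcop.dvd_of_div_mul_eq_intCast hw.ne_zero
      (z := w.1.2.1 + 1 - n) (by rw [dyn1] at h; push_cast; linarith)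
    have hF1 : w.2.2.1 = 0 := Nat.eq_zero_of_dvd_of_lt hdvd hw.fractional_one_lt
    refine ⟨hF1, ?_⟩
    rw [dyn1, hF1] at h
    push_cast at h
    exact_mod_cast (by linarith : (n : ℚ) = w.1.2.1 + 1)
  · rintro ⟨hF1, rfl⟩
    rw [dyn1, hF1]
    push_cast
    ring

theorem natCast_add_dyn2_add_one_sub_ne_zero (hw : Surviving u v w) (hcop : u.Coprime v)
    (n : ℕ) : (n : ℚ) + dyn2 u v w + 1 - u / v ≠ 0 := by
  intro h
  have hdvd : v ∣ w.2.2.2 + 1 := hcop.dvd_of_div_mul_eq_intCast hw.ne_zero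
    (z := n + w.1.2.2 + 1) (by rw [dyn2] at h; push_cast; linarith)
  have := Nat.le_of_dvd (Nat.succ_pos _) hdvd
  have := hw.fractional_two_add_one_lt
  omega

theorem hQ_jtw_Dtw_eq_zero_iff (hw : Surviving u v w) (hcop : u.Coprime v) {n : ℕ}
    (hn : 1 ≤ n) :
    hQ (kQ u v) n (jtw u v w) (Dtw u v w) = 0 ↔ w.2.2.1 = 0 ∧ n = w.1.2.1 + 1 := by
  rw [hQ_jtw_Dtw_eq (hw.ne_zero_of_coprime hcop) hw.ne_zero, mul_eq_zero, mul_eq_zero,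
    or_iff_left (hw.natCast_add_dyn2_add_one_sub_ne_zero hcop n),
    or_iff_right (by exact_mod_cast Nat.one_le_iff_ne_zero.mp hn),
    hw.natCast_sub_dyn1_sub_one_eq_zero_iff hcop]

end Surviving

theorem h_factorisation_general (u v : ℕ) (hcop : Nat.Coprime u v)
    (w : Wt) (hw : Surviving u v w) :
    (∀ n : ℕ, hQ (kQ u v) n (jtw u v w) (Dtw u v w)
        = n * ((n : ℚ) - dyn1 u v w - 1) * ((n : ℚ) + dyn2 u v w + 1 - (u : ℚ)/(v : ℚ))) ∧
    ((∃ n : ℕ, 1 ≤ n ∧ hQ (kQ u v) n (jtw u v w) (Dtw u v w) = 0) ↔ w.2.2.1 = 0) ∧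
    (w.2.2.1 = 0 →
      IsLeast {n : ℕ | 1 ≤ n ∧ hQ (kQ u v) n (jtw u v w) (Dtw u v w) = 0}
        (w.1.2.1 + 1)) := by
  have hzero := fun n (hn : 1 ≤ n) => hw.hQ_jtw_Dtw_eq_zero_iff hcop hn
  have hleast : w.2.2.1 = 0 →
      w.1.2.1 + 1 ∈ {n : ℕ | 1 ≤ n ∧ hQ (kQ u v) n (jtw u v w) (Dtw u v w) = 0} :=
    fun hF1 => ⟨le_add_self, (hzero _ le_add_self).2 ⟨hF1, rfl⟩⟩
  refine ⟨hQ_jtw_Dtw_eq (hw.ne_zero_of_coprime hcop) hw.ne_zero w,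
    ⟨fun ⟨n, hn, h⟩ => ((hzero n hn).1 h).1, fun hF1 => ⟨_, hleast hF1⟩⟩,
    fun hF1 => ⟨hleast hF1, fun n ⟨hn, h⟩ => ((hzero n hn).1 h).2.ge⟩⟩

/-- with `j = j^tw(λ)` and `Δ = Δ^tw(λ)` for `λ ∈ S_{u,v}`, one has
`h_k^n(j,Δ) = n(n − λ₁ − 1)(n + λ₂ + 1 − u/v)` for all `n`; consequently some `n ≥ 1`
satisfies `h_k^n(j,Δ) = 0` iff `λ^F₁ = 0`, in which case the minimal such `n` is
`λ^I₁ + 1`. -/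
theorem h_factorisation (u v : ℕ) (hu : 3 ≤ u) (hv : 2 ≤ v) (hcop : Nat.Coprime u v)
    (w : Wt) (hw : Surviving u v w) :
    (∀ n : ℕ, hQ (kQ u v) n (jtw u v w) (Dtw u v w)
        = n * ((n : ℚ) - dyn1 u v w - 1) * ((n : ℚ) + dyn2 u v w + 1 - (u : ℚ)/(v : ℚ))) ∧
    ((∃ n : ℕ, 1 ≤ n ∧ hQ (kQ u v) n (jtw u v w) (Dtw u v w) = 0) ↔ w.2.2.1 = 0) ∧
    (w.2.2.1 = 0 →
      IsLeast {n : ℕ | 1 ≤ n ∧ hQ (kQ u v) n (jtw u v w) (Dtw u v w) = 0}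
        (w.1.2.1 + 1)) :=
  h_factorisation_general u v hcop w hw

end BPW
end

section
/- Let u, v ≥ 3 be coprime integers and k = −3 + u/v. Define g on pairs by g(λ)^I = (λ^I_2, λ^I_0, λ^I_1) and g(λ)^F = (λ^F_2 + 1, λ^F_0, λ^F_1 − 1). Then: (a) g maps Γ_{u,v} into Γ_{u,v}; (b) g³ is the identity on Γ_{u,v}; (c) g has no fixed points on Γ_{u,v}, so the resulting ℤ/3-action on Γ_{u,v} is free; (d) Δ^tw(g(λ)) = Δ^tw(λ) and ω(g(λ)) = ω(λ) for every λ ∈ Γ_{u,v}; (e) the fibers of the map Γ_{u,v} → ℚ × ℚ, λ ↦ (Δ^tw(λ), ω(λ)), are exactly the orbits of g, so this map is precisely 3-to-1 onto its image. -/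
/-!
Shift the labels by `ρ`: `A = λ^I + (1,1,1)` and `B = (λ^F₀, λ^F₁, λ^F₂ + 1)`. On `Γ_{u,v}` both
have positive entries, with sums `u` and `v`, and `g` rotates `A` and `B` simultaneously. Writing
`t = u/v`, the Dynkin labels are `λ₁ = δ₁ - 1` and `λ₂ = δ₂ - 1 + t` for the gaps
`δᵢ = Aᵢ - t Bᵢ`, which sum to zero. In these coordinates `Δ^tw` and `ω` are, up to affine
changes, the quadratic and cubic invariants of the Weyl group `S₃` acting on
`(δ₁ - δ₂, δ₀ - δ₁, δ₂ - δ₀)`, so two weights share `(Δ^tw, ω)` exactly when their gap vectors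
differ by a rotation or by minus a transposition. As `0 < Aᵢ < u` and `u, v` are coprime, a gap
determines `(Aᵢ, Bᵢ)`, so rotations of the gap vector come from the `g`-orbit; minus a
transposition would force `u ∣ A'ᵢ + A_τᵢ`, hence `u ≤ A'ᵢ + A_τᵢ`, for all three `i`, and summing
gives `3u ≤ 2u`.
-/

namespace BPW

/-- The map `g : λ ↦ μ` with `μ^I = (λ^I₂, λ^I₀, λ^I₁)` and
`μ^F = (λ^F₂ + 1, λ^F₀, λ^F₁ − 1)`. -/
def gmap (w : Wt) : Wt :=
  ((w.1.2.2, w.1.1, w.1.2.1), (w.2.2.2 + 1, w.2.1, w.2.2.1 - 1))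

end BPW

theorem perm_of_esymm_eq {R : Type*} [CommRing R] [IsDomain R] {a b c a' b' c' : R}
    (h₁ : a' + b' + c' = a + b + c) (h₂ : a' * b' + b' * c' + c' * a' = a * b + b * c + c * a)
    (h₃ : a' * b' * c' = a * b * c) :
    (a' = a ∧ b' = b ∧ c' = c) ∨ (a' = b ∧ b' = c ∧ c' = a) ∨ (a' = c ∧ b' = a ∧ c' = b) ∨
      (a' = a ∧ b' = c ∧ c' = b) ∨ (a' = b ∧ b' = a ∧ c' = c) ∨ (a' = c ∧ b' = b ∧ c' = a) := by
  have ha : (a' - a) * (a' - b) * (a' - c) = 0 := by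
    linear_combination a' ^ 2 * h₁ - a' * h₂ + h₃
  simp only [mul_eq_zero, sub_eq_zero] at ha
  rcases ha with (rfl | rfl) | rfl
  · have hb : (b' - b) * (b' - c) = 0 := by linear_combination (b' + a') * h₁ - h₂
    simp only [mul_eq_zero, sub_eq_zero] at hb
    rcases hb with rfl | rfl
    · exact .inl ⟨rfl, rfl, by linear_combination h₁⟩
    · exact .inr <| .inr <| .inr <| .inl ⟨rfl, rfl, by linear_combination h₁⟩
  · have hb : (b' - a) * (b' - c) = 0 := by linear_combination (b' + a') * h₁ - h₂
    simp only [mul_eq_zero, sub_eq_zero] at hb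
    rcases hb with rfl | rfl
    · exact .inr <| .inr <| .inr <| .inr <| .inl ⟨rfl, rfl, by linear_combination h₁⟩
    · exact .inr <| .inl ⟨rfl, rfl, by linear_combination h₁⟩
  · have hb : (b' - a) * (b' - b) = 0 := by linear_combination (b' + a') * h₁ - h₂
    simp only [mul_eq_zero, sub_eq_zero] at hb
    rcases hb with rfl | rfl
    · exact .inr <| .inr <| .inl ⟨rfl, rfl, by linear_combination h₁⟩
    · exact .inr <| .inr <| .inr <| .inr <| .inr ⟨rfl, rfl, by linear_combination h₁⟩

theorem eq_of_weyl_invariants_eq {K : Type*} [Field K] [CharZero K] {x y x' y' : K}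
    (hQ : x' ^ 2 + x' * y' + y' ^ 2 = x ^ 2 + x * y + y ^ 2)
    (hV : (x' - y') * (2 * x' + y') * (x' + 2 * y') = (x - y) * (2 * x + y) * (x + 2 * y)) :
    (x' = x ∧ y' = y) ∨ (x' = -x - y ∧ y' = x) ∨ (x' = y ∧ y' = -x - y) ∨
      (x' = -y ∧ y' = -x) ∨ (x' = -x ∧ y' = x + y) ∨ (x' = x + y ∧ y' = -y) := by
  rcases perm_of_esymm_eq (a := x - y) (b := -(2 * x + y)) (c := x + 2 * y)
      (a' := x' - y') (b' := -(2 * x' + y')) (c' := x' + 2 * y') (by ring)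
      (by linear_combination -3 * hQ) (by linear_combination -hV) with
    ⟨ha, -, hc⟩ | ⟨ha, -, hc⟩ | ⟨ha, -, hc⟩ | ⟨ha, -, hc⟩ | ⟨ha, -, hc⟩ | ⟨ha, -, hc⟩ <;>
  grind

theorem exists_eq_mul_of_cast_eq_div_mul {u v : ℕ} (hv : v ≠ 0) (huv : u.Coprime v) {X Y : ℤ}
    (h : (X : ℚ) = u / v * Y) : ∃ s : ℤ, X = s * u ∧ Y = s * v := by
  have hXY : X * v = u * Y := by
    rw [div_mul_eq_mul_div, eq_div_iff (by exact_mod_cast hv)] at h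
    exact_mod_cast h
  obtain ⟨s, rfl⟩ : (v : ℤ) ∣ Y :=
    (Nat.isCoprime_iff_coprime.mpr huv.symm).dvd_of_dvd_mul_left ⟨X, by rw [← hXY]; ring⟩
  refine ⟨s, mul_right_cancel₀ (by exact_mod_cast hv : (v : ℤ) ≠ 0) ?_, mul_comm _ _⟩
  rw [hXY]; ring

namespace BPW

def gap (t : ℚ) (a b : ℕ) : ℚ := a - t * b

section Gaps

variable {u v : ℕ} {w w' : Wt}

theorem eq_of_gap_eq (hv : v ≠ 0) (huv : u.Coprime v) {a a' b b' : ℕ} (ha : a < u)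
    (ha' : a' < u) (h : gap (u / v) a' b' = gap (u / v) a b) : a' = a ∧ b' = b := by
  obtain ⟨s, hs, hs'⟩ := exists_eq_mul_of_cast_eq_div_mul hv huv (X := a' - a) (Y := b' - b)
    (by unfold gap at h; push_cast; linear_combination h)
  have : s = 0 := by nlinarith
  subst this
  omega

theorem le_add_of_gap_eq_neg (hv : v ≠ 0) (huv : u.Coprime v) {a a' b b' : ℕ}
    (ha : 0 < a + a') (h : gap (u / v) a' b' = -gap (u / v) a b) : u ≤ a + a' := by
  obtain ⟨s, hs, -⟩ := exists_eq_mul_of_cast_eq_div_mul hv huv (X := a + a') (Y := b + b')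
    (by unfold gap at h; push_cast; linear_combination h)
  have : 0 < s := by nlinarith
  nlinarith

def gap0 (u v : ℕ) (w : Wt) : ℚ := gap (u / v) (w.1.1 + 1) w.2.1

def gap1 (u v : ℕ) (w : Wt) : ℚ := gap (u / v) (w.1.2.1 + 1) w.2.2.1

def gap2 (u v : ℕ) (w : Wt) : ℚ := gap (u / v) (w.1.2.2 + 1) (w.2.2.2 + 1)

theorem gap0_eq (hu : 3 ≤ u) (hv : v ≠ 0) (hw : Surviving u v w) :
    gap0 u v w = -gap1 u v w - gap2 u v w := by
  obtain ⟨⟨a0, a1, a2⟩, b0, b1, b2⟩ := w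
  obtain ⟨hA, hB, -⟩ := hw
  simp only [sumT] at hA hB
  have hA' : (a0 + a1 + a2 + 3 : ℚ) = u := by exact_mod_cast (by omega : a0 + a1 + a2 + 3 = u)
  have hB' : (b0 + b1 + b2 + 1 : ℚ) = v := by exact_mod_cast (by omega : b0 + b1 + b2 + 1 = v)
  simp only [gap0, gap1, gap2, gap]
  push_cast
  rw [← hA', ← hB']
  field_simp
  ring

theorem dyn1_eq_gap1 (w : Wt) : dyn1 u v w = gap1 u v w - 1 := by
  simp only [dyn1, gap1, gap]
  push_cast
  ring

theorem dyn2_eq_gap2 (w : Wt) : dyn2 u v w = gap2 u v w - 1 + u / v := by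
  simp only [dyn2, gap2, gap]
  push_cast
  ring

theorem Dtw_eq_gap (hu : u ≠ 0) (hv : v ≠ 0) (w : Wt) :
    Dtw u v w = (gap1 u v w ^ 2 + gap1 u v w * gap2 u v w + gap2 u v w ^ 2 - 3) / (3 * (u / v))
      + 7 / 8 - u / v / 4 := by
  have ht : (u / v : ℚ) ≠ 0 := div_ne_zero (by exact_mod_cast hu) (by exact_mod_cast hv)
  have hk : kQ u v = u / v - 3 := by unfold kQ; ring
  rw [Dtw, Dwt, dyn1_eq_gap1, dyn2_eq_gap2, hk, sub_add_cancel]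
  field_simp
  ring

theorem omg_eq_gap (w : Wt) :
    omg u v w = -(2 / 27) * (gap1 u v w - gap2 u v w) * (2 * gap1 u v w + gap2 u v w)
      * (gap1 u v w + 2 * gap2 u v w) := by
  rw [omg, dyn1_eq_gap1, dyn2_eq_gap2, kQ]
  ring

theorem gap0_gmap : gap0 u v (gmap w) = gap2 u v w := by
  simp only [gap0, gap2, gmap]

theorem gap1_gmap : gap1 u v (gmap w) = gap0 u v w := by
  simp only [gap0, gap1, gmap]

theorem gap2_gmap (hw : 1 ≤ w.2.2.1) : gap2 u v (gmap w) = gap1 u v w := by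
  simp only [gap1, gap2, gmap, Nat.sub_add_cancel hw]

theorem eq_of_gap1_eq_of_gap2_eq (hu : 3 ≤ u) (hv : v ≠ 0) (huv : u.Coprime v)
    (hw : Surviving u v w) (hw' : Surviving u v w') (h₁ : gap1 u v w' = gap1 u v w)
    (h₂ : gap2 u v w' = gap2 u v w) : w' = w := by
  obtain ⟨⟨a0, a1, a2⟩, b0, b1, b2⟩ := w
  obtain ⟨⟨c0, c1, c2⟩, d0, d1, d2⟩ := w'
  obtain ⟨hA, hB, -⟩ := hw
  obtain ⟨hC, hD, -⟩ := hw'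
  simp only [sumT] at hA hB hC hD
  simp only [gap1, gap2] at h₁ h₂
  obtain ⟨ha₁, hb₁⟩ := eq_of_gap_eq hv huv (by omega) (by omega) h₁
  obtain ⟨ha₂, hb₂⟩ := eq_of_gap_eq hv huv (by omega) (by omega) h₂
  simp only [Prod.mk.injEq]
  omega

theorem not_gap_reflection (hu : 3 ≤ u) (hv : v ≠ 0) (huv : u.Coprime v)
    (hw : Surviving u v w) (hw' : Surviving u v w') :
    ¬(gap1 u v w' = -gap2 u v w ∧ gap2 u v w' = -gap1 u v w) := by
  rintro ⟨h₁, h₂⟩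
  have h₀ : gap0 u v w' = -gap0 u v w := by
    rw [gap0_eq hu hv hw, gap0_eq hu hv hw', h₁, h₂]
    ring
  have l₀ := le_add_of_gap_eq_neg hv huv (by omega) h₀
  have l₁ := le_add_of_gap_eq_neg hv huv (by omega) h₁
  have l₂ := le_add_of_gap_eq_neg hv huv (by omega) h₂
  obtain ⟨hA, -, -⟩ := hw
  obtain ⟨hC, -, -⟩ := hw'
  simp only [sumT] at hA hC
  omega

theorem gmap_mem (hw : InGamma u v w) : InGamma u v (gmap w) := by
  obtain ⟨⟨a0, a1, a2⟩, b0, b1, b2⟩ := w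
  obtain ⟨⟨hA, hB, h₀⟩, h₁⟩ := hw
  simp only [InGamma, Surviving, sumT, gmap] at *
  omega

theorem gmap_gmap_gmap (hw : InGamma u v w) : gmap (gmap (gmap w)) = w := by
  obtain ⟨⟨a0, a1, a2⟩, b0, b1, b2⟩ := w
  obtain ⟨⟨-, -, h₀ : 1 ≤ b0⟩, h₁ : 1 ≤ b1⟩ := hw
  simp only [gmap, Nat.sub_add_cancel h₀, Nat.sub_add_cancel h₁, Nat.add_sub_cancel]

theorem gmap_ne (hu : 3 ≤ u) (huv : u.Coprime v) (hw : Surviving u v w) : gmap w ≠ w := by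
  obtain ⟨⟨a0, a1, a2⟩, b0, b1, b2⟩ := w
  obtain ⟨hA, hB, -⟩ := hw
  simp only [sumT] at hA hB
  simp only [gmap, ne_eq, Prod.mk.injEq]
  intro h
  have := Nat.eq_one_of_dvd_coprimes huv (k := 3) (by omega) (by omega)
  omega

theorem Dtw_gmap (hu : 3 ≤ u) (hv : v ≠ 0) (hw : InGamma u v w) :
    Dtw u v (gmap w) = Dtw u v w := by
  rw [Dtw_eq_gap (by omega) hv, Dtw_eq_gap (by omega) hv, gap1_gmap, gap2_gmap hw.2,
    gap0_eq hu hv hw.1]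
  ring

theorem omg_gmap (hu : 3 ≤ u) (hv : v ≠ 0) (hw : InGamma u v w) :
    omg u v (gmap w) = omg u v w := by
  rw [omg_eq_gap, omg_eq_gap, gap1_gmap, gap2_gmap hw.2, gap0_eq hu hv hw.1]
  ring

theorem eq_or_eq_gmap_or_eq_gmap_gmap (hu : 3 ≤ u) (hv : v ≠ 0) (huv : u.Coprime v)
    (hw : InGamma u v w) (hw' : InGamma u v w') (hD : Dtw u v w' = Dtw u v w)
    (hO : omg u v w' = omg u v w) : w' = w ∨ w' = gmap w ∨ w' = gmap (gmap w) := by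
  have hQ : gap1 u v w' ^ 2 + gap1 u v w' * gap2 u v w' + gap2 u v w' ^ 2 =
      gap1 u v w ^ 2 + gap1 u v w * gap2 u v w + gap2 u v w ^ 2 := by
    rw [Dtw_eq_gap (by omega) hv, Dtw_eq_gap (by omega) hv] at hD
    have ht : 3 * (u / v : ℚ) ≠ 0 :=
      mul_ne_zero three_ne_zero (div_ne_zero (by norm_cast; omega) (by exact_mod_cast hv))
    rwa [sub_left_inj, add_left_inj, div_left_inj' ht, sub_left_inj] at hD
  have hV : (gap1 u v w' - gap2 u v w') * (2 * gap1 u v w' + gap2 u v w')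
      * (gap1 u v w' + 2 * gap2 u v w') = (gap1 u v w - gap2 u v w)
      * (2 * gap1 u v w + gap2 u v w) * (gap1 u v w + 2 * gap2 u v w) := by
    rw [omg_eq_gap, omg_eq_gap] at hO
    linear_combination (-27 / 2 : ℚ) * hO
  have hgw := gmap_mem hw
  have h₁g : gap1 u v (gmap w) = -gap1 u v w - gap2 u v w := by
    rw [gap1_gmap, gap0_eq hu hv hw.1]
  have h₂g : gap2 u v (gmap w) = gap1 u v w := gap2_gmap hw.2
  have h₁gg : gap1 u v (gmap (gmap w)) = gap2 u v w := by rw [gap1_gmap, gap0_gmap]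
  have h₂gg : gap2 u v (gmap (gmap w)) = -gap1 u v w - gap2 u v w := by
    rw [gap2_gmap hgw.2, h₁g]
  have eqOfGaps := fun {w₀ : Wt} (hw₀ : InGamma u v w₀) =>
    eq_of_gap1_eq_of_gap2_eq hu hv huv hw₀.1 hw'.1
  have noReflection := fun {w₀ : Wt} (hw₀ : InGamma u v w₀) =>
    not_gap_reflection hu hv huv hw₀.1 hw'.1
  rcases eq_of_weyl_invariants_eq hQ hV with
    ⟨h₁, h₂⟩ | ⟨h₁, h₂⟩ | ⟨h₁, h₂⟩ | ⟨h₁, h₂⟩ | ⟨h₁, h₂⟩ | ⟨h₁, h₂⟩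
  · exact .inl (eqOfGaps hw h₁ h₂)
  · exact .inr <| .inl <| eqOfGaps hgw (h₁.trans h₁g.symm) (h₂.trans h₂g.symm)
  · exact .inr <| .inr <| eqOfGaps (gmap_mem hgw) (h₁.trans h₁gg.symm) (h₂.trans h₂gg.symm)
  · exact (noReflection hw ⟨h₁, h₂⟩).elim
  · exact (noReflection hgw ⟨by rw [h₁, h₂g], by rw [h₂, h₁g]; ring⟩).elim
  · exact (noReflection (gmap_mem hgw) ⟨by rw [h₁, h₂gg]; ring, by rw [h₂, h₁gg]⟩).elim

end Gaps

/-- `g` restricts to a free `ℤ/3`-action on `Γ_{u,v}` preserving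
`(Δ^tw, ω)`, and the fibres of `λ ↦ (Δ^tw(λ), ω(λ))` on `Γ_{u,v}` are exactly the
`g`-orbits (so this map is precisely 3-to-1 onto its image). -/
theorem gmap_Z3_action (u v : ℕ) (hu : 3 ≤ u) (hv : 3 ≤ v) (hcop : Nat.Coprime u v) :
    (∀ w : Wt, InGamma u v w → InGamma u v (gmap w)) ∧
    (∀ w : Wt, InGamma u v w → gmap (gmap (gmap w)) = w) ∧
    (∀ w : Wt, InGamma u v w → gmap w ≠ w) ∧
    (∀ w : Wt, InGamma u v w →
      Dtw u v (gmap w) = Dtw u v w ∧ omg u v (gmap w) = omg u v w) ∧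
    (∀ w w' : Wt, InGamma u v w → InGamma u v w' →
      ((Dtw u v w' = Dtw u v w ∧ omg u v w' = omg u v w) ↔
        (w' = w ∨ w' = gmap w ∨ w' = gmap (gmap w)))) := by
  have hv₀ : v ≠ 0 := by omega
  refine ⟨fun w hw => gmap_mem hw, fun w hw => gmap_gmap_gmap hw,
    fun w hw => gmap_ne hu hcop hw.1, fun w hw => ⟨Dtw_gmap hu hv₀ hw, omg_gmap hu hv₀ hw⟩,
    fun w w' hw hw' => ⟨fun ⟨hD, hO⟩ => eq_or_eq_gmap_or_eq_gmap_gmap hu hv₀ hcop hw hw' hD hO, ?_⟩⟩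
  rintro (rfl | rfl | rfl)
  · exact ⟨rfl, rfl⟩
  · exact ⟨Dtw_gmap hu hv₀ hw, omg_gmap hu hv₀ hw⟩
  · exact ⟨(Dtw_gmap hu hv₀ (gmap_mem hw)).trans (Dtw_gmap hu hv₀ hw),
      (omg_gmap hu hv₀ (gmap_mem hw)).trans (omg_gmap hu hv₀ hw)⟩

end BPW
end

section
/- Let u, v ≥ 3 be coprime integers and k = −3 + u/v. Define c on pairs by c(λ)^I = (λ^I_2, λ^I_1, λ^I_0) and c(λ)^F = (λ^F_2 + 1, λ^F_1, λ^F_0 − 1). Then c maps S_{u,v} into S_{u,v} and Γ_{u,v} into Γ_{u,v}, c² is the identity, and for every λ ∈ S_{u,v} one has Δ^tw(c(λ)) = Δ^tw(λ) and ω(c(λ)) = −ω(λ). -/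
/-!
On Dynkin labels `c` fixes `λ₁` and sends `λ₂` to `λ₀ + (k + 3)`, where `λ₀ = λ^I₀ − (u/v)λ^F₀`.
For a surviving weight `λ₀ + λ₁ + λ₂ = k`, so `c` acts as the reflection
`λ₂ ↦ 2k + 3 − λ₁ − λ₂`. Since `Δ^tw` and `ω` depend only on `(λ₁, λ₂, k)`, the claims about them
are identities of rational functions in these three variables.
-/

namespace BPW

/-- The conjugation map `c : λ ↦ μ` with `μ^I = (λ^I₂, λ^I₁, λ^I₀)` and
`μ^F = (λ^F₂ + 1, λ^F₁, λ^F₀ − 1)`. -/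
def cmap (w : Wt) : Wt :=
  ((w.1.2.2, w.1.2.1, w.1.1), (w.2.2.2 + 1, w.2.2.1, w.2.1 - 1))

theorem kQ_add_three (u v : ℕ) : kQ u v + 3 = (u : ℚ) / v := by
  rw [kQ]; ring

def dyn0 (u v : ℕ) (w : Wt) : ℚ := (w.1.1 : ℚ) - (u : ℚ) / (v : ℚ) * (w.2.1 : ℚ)

section Reflection

variable {u v : ℕ} {w w' : Wt}

theorem Dtw_eq_of_reflect (hk : kQ u v + 3 ≠ 0) (h₁ : dyn1 u v w' = dyn1 u v w)
    (h₂ : dyn2 u v w' = 2 * kQ u v + 3 - dyn1 u v w - dyn2 u v w) :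
    Dtw u v w' = Dtw u v w := by
  simp only [Dtw, Dwt, h₁, h₂]
  field_simp
  ring

/-- The reflection swaps the first two factors of `ω` and negates the third. -/
theorem omg_eq_neg_of_reflect (h₁ : dyn1 u v w' = dyn1 u v w)
    (h₂ : dyn2 u v w' = 2 * kQ u v + 3 - dyn1 u v w - dyn2 u v w) :
    omg u v w' = -omg u v w := by
  simp only [omg, h₁, h₂]
  ring

end Reflection

section Surviving

variable {u v : ℕ} {w : Wt}

theorem Surviving.two_le (hw : Surviving u v w) : 2 ≤ v := by
  obtain ⟨-, hsum, hpos⟩ := hw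
  simp only [sumT] at hsum
  omega

theorem Surviving.cast_sumT_fst (hu : 3 ≤ u) (hw : Surviving u v w) :
    (w.1.1 + w.1.2.1 + w.1.2.2 : ℚ) = u - 3 := by
  have h : w.1.1 + w.1.2.1 + w.1.2.2 + 3 = u := by
    have := hw.1; simp only [sumT] at this; omega
  rw [← h]; push_cast; ring

theorem Surviving.cast_sumT_snd (hw : Surviving u v w) :
    (w.2.1 + w.2.2.1 + w.2.2.2 : ℚ) = v - 1 := by
  have h : w.2.1 + w.2.2.1 + w.2.2.2 + 1 = v := by
    have := hw.2.1; simp only [sumT] at this; have := hw.two_le; omega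
  rw [← h]; push_cast; ring

theorem Surviving.dyn0_add_dyn1_add_dyn2 (hu : 3 ≤ u) (hw : Surviving u v w) :
    dyn0 u v w + dyn1 u v w + dyn2 u v w = kQ u v := by
  have hv : (v : ℚ) ≠ 0 := by have := hw.two_le; positivity
  have hI := hw.cast_sumT_fst hu
  have hF := hw.cast_sumT_snd
  calc dyn0 u v w + dyn1 u v w + dyn2 u v w
      = (w.1.1 + w.1.2.1 + w.1.2.2 : ℚ) - u / v * (w.2.1 + w.2.2.1 + w.2.2.2 : ℚ) := by
        simp only [dyn0, dyn1, dyn2]; ring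
    _ = kQ u v := by rw [hI, hF, kQ]; field_simp; ring

theorem dyn1_cmap : dyn1 u v (cmap w) = dyn1 u v w := rfl

theorem Surviving.dyn2_cmap (hu : 3 ≤ u) (hw : Surviving u v w) :
    dyn2 u v (cmap w) = 2 * kQ u v + 3 - dyn1 u v w - dyn2 u v w := by
  have hdyn0 : dyn2 u v (cmap w) = dyn0 u v w + u / v := by
    simp only [dyn2, dyn0, cmap, Nat.cast_sub hw.2.2]
    ring
  rw [hdyn0, ← kQ_add_three, ← hw.dyn0_add_dyn1_add_dyn2 hu]
  ring

theorem Surviving.cmap_cmap (hw : Surviving u v w) : cmap (cmap w) = w := by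
  obtain ⟨⟨a₀, a₁, a₂⟩, ⟨b₀, b₁, b₂⟩⟩ := w
  have hb₀ : b₀ - 1 + 1 = b₀ := Nat.sub_add_cancel hw.2.2
  simp only [cmap, hb₀, Nat.add_sub_cancel]

theorem Surviving.cmap (hw : Surviving u v w) : Surviving u v (cmap w) := by
  obtain ⟨hI, hF, hpos⟩ := hw
  simp only [Surviving, sumT, BPW.cmap] at *
  omega

theorem InGamma.cmap (hw : InGamma u v w) : InGamma u v (cmap w) :=
  ⟨hw.1.cmap, hw.2⟩

end Surviving

theorem cmap_Z2_action_general (u v : ℕ) (hu : 3 ≤ u) :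
    (∀ w : Wt, Surviving u v w → Surviving u v (cmap w)) ∧
    (∀ w : Wt, InGamma u v w → InGamma u v (cmap w)) ∧
    (∀ w : Wt, Surviving u v w → cmap (cmap w) = w) ∧
    (∀ w : Wt, Surviving u v w →
      Dtw u v (cmap w) = Dtw u v w ∧ omg u v (cmap w) = -omg u v w) := by
  refine ⟨fun w hw => hw.cmap, fun w hw => hw.cmap, fun w hw => hw.cmap_cmap, fun w hw => ?_⟩
  have hk : kQ u v + 3 ≠ 0 := by
    have := hw.two_le
    rw [kQ_add_three]
    positivity
  exact ⟨Dtw_eq_of_reflect hk dyn1_cmap (hw.dyn2_cmap hu),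
    omg_eq_neg_of_reflect dyn1_cmap (hw.dyn2_cmap hu)⟩

/-- `c` maps `S_{u,v}` into `S_{u,v}` and `Γ_{u,v}` into `Γ_{u,v}`,
`c²` is the identity, and `Δ^tw(c(λ)) = Δ^tw(λ)`, `ω(c(λ)) = −ω(λ)`. -/
theorem cmap_Z2_action (u v : ℕ) (hu : 3 ≤ u) (hv : 3 ≤ v) (hcop : Nat.Coprime u v) :
    (∀ w : Wt, Surviving u v w → Surviving u v (cmap w)) ∧
    (∀ w : Wt, InGamma u v w → InGamma u v (cmap w)) ∧
    (∀ w : Wt, Surviving u v w → cmap (cmap w) = w) ∧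
    (∀ w : Wt, Surviving u v w →
      Dtw u v (cmap w) = Dtw u v w ∧ omg u v (cmap w) = -omg u v w) :=
  cmap_Z2_action_general u v hu

end BPW
end

section
/- Let u ≥ 3 and v ≥ 2 be coprime integers and k = −3 + u/v. For λ ∈ S_{u,v} with λ^F_1 = 0, define μ by μ^I = (λ^I_2, λ^I_0, λ^I_1) and μ^F = (λ^F_2 + 1, λ^F_0 − 1, 0). Then μ ∈ S_{u,v}, and moreover j(μ) = j(λ) + (2k+3)/3 − λ^I_1 and Δ(μ) = Δ(λ) + j(λ) + (2k+3)/6 − λ^I_1/2. (These identities encode that the spectral flow of the simple highest-weight module labelled by λ is the simple highest-weight module labelled by μ.) -/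
/-! Since `u/v = k + 3`, the constraints `λ^I ∈ P^{u−3}` and `λ^F ∈ P^{v−1}` eliminate `λ^I₀`
and `λ^F₀`, and one finds that `μ` has Dynkin labels `μ₁ = 2k + 3 − λ₁ − λ₂` and `μ₂ = λ₁`
(here `λ₁ = λ^I₁` because `λ^F₁ = 0`). Both identities are then rational-function identities
in `k, λ₁, λ₂`, valid as long as `k + 3 ≠ 0`. -/

namespace BPW

/-- The map `λ ↦ μ` with `μ^I = (λ^I₂, λ^I₀, λ^I₁)` and `μ^F = (λ^F₂ + 1, λ^F₀ − 1, 0)`. -/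
def mu19 (w : Wt) : Wt :=
  ((w.1.2.2, w.1.1, w.1.2.1), (w.2.2.2 + 1, w.2.1 - 1, 0))

section ConformalWeight

variable {K : Type*} [Field K] [CharZero K]

def conformalWeight (k x y : K) : K :=
  ((x - y) ^ 2 - 3 * (x + y) * (2 * (k + 1) - x - y)) / (12 * (k + 3))

theorem conformalWeight_flow (k x y : K) (hk : k + 3 ≠ 0) :
    conformalWeight k (2 * k + 3 - x - y) x
      = conformalWeight k x y + (x - y) / 3 + (2 * k + 3) / 6 - x / 2 := by
  unfold conformalWeight
  field_simp
  ring

end ConformalWeight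

theorem Dwt_eq_conformalWeight (u v : ℕ) (w : Wt) :
    Dwt u v w = conformalWeight (kQ u v) (dyn1 u v w) (dyn2 u v w) :=
  rfl

theorem kQ_add_three_pos {u v : ℕ} (hu : 0 < u) (hv : 0 < v) : 0 < kQ u v + 3 := by
  rw [kQ, neg_add_cancel_comm]
  positivity

theorem dyn1_of_frac_eq_zero (u v : ℕ) {w : Wt} (hF1 : w.2.2.1 = 0) :
    dyn1 u v w = w.1.2.1 := by
  simp [dyn1, hF1]

@[simp]
theorem dyn2_mu19 (u v : ℕ) (w : Wt) : dyn2 u v (mu19 w) = w.1.2.1 := by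
  simp [dyn2, mu19]

namespace Surviving

variable {u v : ℕ} {w : Wt}

theorem two_le_s19 (hw : Surviving u v w) : 2 ≤ v := by
  obtain ⟨-, hF, hF0⟩ := hw
  unfold sumT at hF
  omega

theorem mu19 (hw : Surviving u v w) (hF1 : w.2.2.1 = 0) : Surviving u v (mu19 w) := by
  obtain ⟨hI, hF, hF0⟩ := hw
  simp only [Surviving, sumT, BPW.mu19] at hI hF hF1 ⊢
  omega

theorem dyn1_mu19 (hu : 3 ≤ u) (hw : Surviving u v w) :
    dyn1 u v (BPW.mu19 w) = 2 * kQ u v + 3 - dyn1 u v w - dyn2 u v w := by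
  have hv : (v : ℚ) ≠ 0 := by have := hw.two_le_s19; positivity
  obtain ⟨⟨a₀, a₁, a₂⟩, b₀, b₁, b₂⟩ := w
  obtain ⟨hI, hF, hb₀⟩ := hw
  simp only [sumT] at hI hF hb₀
  have ha₀ : (a₀ : ℚ) = u - 3 - a₁ - a₂ := by
    rw [eq_sub_iff_add_eq, eq_sub_iff_add_eq, eq_sub_iff_add_eq]
    exact_mod_cast (by omega : a₀ + a₂ + a₁ + 3 = u)
  have hb₀' : ((b₀ - 1 : ℕ) : ℚ) = v - 2 - b₁ - b₂ := by
    rw [eq_sub_iff_add_eq, eq_sub_iff_add_eq, eq_sub_iff_add_eq]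
    exact_mod_cast (by omega : b₀ - 1 + b₂ + b₁ + 2 = v)
  simp only [dyn1, dyn2, kQ, BPW.mu19, ha₀, hb₀']
  field_simp
  ring

end Surviving

theorem mu19_spectral_flow_general (u v : ℕ) (hu : 3 ≤ u)
    (w : Wt) (hw : Surviving u v w) (hF1 : w.2.2.1 = 0) :
    Surviving u v (mu19 w) ∧
    jwt u v (mu19 w) = jwt u v w + (2 * kQ u v + 3) / 3 - (w.1.2.1 : ℚ) ∧
    Dwt u v (mu19 w) = Dwt u v w + jwt u v w + (2 * kQ u v + 3) / 6 - (w.1.2.1 : ℚ) / 2 := by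
  have hk : kQ u v + 3 ≠ 0 := (kQ_add_three_pos (by omega) (by have := hw.two_le_s19; omega)).ne'
  have hμ₁ := hw.dyn1_mu19 hu
  have hμ₂ : dyn2 u v (mu19 w) = dyn1 u v w := by rw [dyn2_mu19, dyn1_of_frac_eq_zero u v hF1]
  rw [← dyn1_of_frac_eq_zero u v hF1]
  refine ⟨hw.mu19 hF1, ?_, ?_⟩
  · rw [jwt, jwt, hμ₁, hμ₂]
    ring
  · rw [Dwt_eq_conformalWeight, Dwt_eq_conformalWeight, hμ₁, hμ₂, conformalWeight_flow _ _ _ hk,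
      jwt]

/-- for `λ ∈ S_{u,v}` with `λ^F₁ = 0`, the weight `μ` with
`μ^I = (λ^I₂, λ^I₀, λ^I₁)` and `μ^F = (λ^F₂+1, λ^F₀−1, 0)` lies in `S_{u,v}`, and
`j(μ) = j(λ) + (2k+3)/3 − λ^I₁`, `Δ(μ) = Δ(λ) + j(λ) + (2k+3)/6 − λ^I₁/2`
(the spectral flow identities). -/
theorem mu19_spectral_flow (u v : ℕ) (hu : 3 ≤ u) (hv : 2 ≤ v) (hcop : Nat.Coprime u v)
    (w : Wt) (hw : Surviving u v w) (hF1 : w.2.2.1 = 0) :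
    Surviving u v (mu19 w) ∧
    jwt u v (mu19 w) = jwt u v w + (2 * kQ u v + 3) / 3 - (w.1.2.1 : ℚ) ∧
    Dwt u v (mu19 w) = Dwt u v w + jwt u v w + (2 * kQ u v + 3) / 6 - (w.1.2.1 : ℚ) / 2 :=
  mu19_spectral_flow_general u v hu w hw hF1

end BPW
end
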